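/- arXiv:1912.02028 — 5 statements merged into one kernel-verified Lean document; each statement's English description precedes it below -/
import Mathlib

section
/- Let r be a reward function that is differentiable on [0,∞), let c > 0, and let σ be a normal stationary policy on [0,c]. Let g : [0,c] → ℝ be nondecreasing, Lipschitz, and concave, and suppose that for Lebesgue-almost every x ∈ [0,c] at which g is differentiable at x − σ(x), one has g'(x − σ(x)) ≤ r'(σ(x)). Then the function h(x) := r(σ(x)) + g(x − σ(x)) is nondecreasing, Lipschitz, and concave on [0,c], and for Lebesgue-almost every x ∈ [0,c] at which h is differentiable, h'(x) ≤ r'(σ(x)). -/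
/-!
Write `u x = x - σ x` and `h x = r (σ x) + g (u x)`. Concavity of `σ` together with `0 ≤ σ 0` and
`σ x ≤ x` shows that `u` is nondecreasing; as `σ` is too and `σ + u = id`, both are 1-Lipschitz.
This gives monotonicity and the Lipschitz bound for `h`.

The heart of the matter is the chord bound `g v - g (u x) ≤ r' (σ x) * (v - u x)` for
`u x ≤ v ≤ u c`. The Lipschitz map `u` sends null sets to null sets, so almost every `w` in that
range is `u y` for some `y ≥ x` at which the hypothesis on `g'` holds, whence
`g' w ≤ r' (σ y) ≤ r' (σ x)`; now integrate `g'`, which is legitimate as `g` is absolutely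
continuous. Adding the tangent line bound for `r` at `σ x` gives the supergradient inequality
`r s + g v ≤ h x + r' (σ x) * (s + v - x)`. Taking `s`, `v` to be convex combinations of values of
`σ` and `u` yields concavity of `h`; taking `s = σ y`, `v = u y` with `y ↓ x` yields
`h' x ≤ r' (σ x)`.
-/

open Set MeasureTheory Filter Topology

theorem ConcaveOn.antitoneOn_of_hasDerivWithinAt {f f' : ℝ → ℝ} {S : Set ℝ}
    (hf : ConcaveOn ℝ S f) (hd : ∀ x ∈ S, HasDerivWithinAt f (f' x) S x) : AntitoneOn f' S := by
  intro x hx y hy hxy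
  rcases hxy.eq_or_lt with rfl | hlt
  · exact le_rfl
  exact (hf.le_slope_of_hasDerivWithinAt hx hy hlt (hd y hy)).trans
    (hf.slope_le_of_hasDerivWithinAt hx hy hlt (hd x hx))

theorem ConcaveOn.le_add_mul_sub_of_hasDerivWithinAt {f : ℝ → ℝ} {f' x y : ℝ} {S : Set ℝ}
    (hf : ConcaveOn ℝ S f) (hx : x ∈ S) (hy : y ∈ S) (hd : HasDerivWithinAt f f' S x) :
    f y ≤ f x + f' * (y - x) := by
  rcases lt_trichotomy y x with hlt | rfl | hlt
  · have := hf.le_slope_of_hasDerivWithinAt hy hx hlt hd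
    rw [slope_def_field, le_div_iff₀ (sub_pos.2 hlt)] at this
    linarith
  · simp
  · have := hf.slope_le_of_hasDerivWithinAt hx hy hlt hd
    rw [slope_def_field, div_le_iff₀ (sub_pos.2 hlt)] at this
    linarith

theorem HasDerivAt.le_of_eventually_le_add_mul_sub {f : ℝ → ℝ} {f' x L : ℝ}
    (hf : HasDerivAt f f' x) (h : ∀ᶠ y in 𝓝[>] x, f y ≤ f x + L * (y - x)) : f' ≤ L := by
  refine le_of_tendsto (hf.tendsto_slope.mono_left (nhdsGT_le_nhdsNE x)) ?_
  filter_upwards [h, self_mem_nhdsWithin] with y hy hxy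
  rw [slope_def_field, div_le_iff₀ (sub_pos.2 hxy)]
  linarith

theorem AbsolutelyContinuousOnInterval.sub_le_mul_sub_of_ae_deriv_le {g : ℝ → ℝ} {a b L : ℝ}
    (hg : AbsolutelyContinuousOnInterval g a b) (hab : a ≤ b)
    (hderiv : ∀ᵐ w ∂volume.restrict (Icc a b), DifferentiableAt ℝ g w → deriv g w ≤ L) :
    g b - g a ≤ L * (b - a) := by
  have hdiff := hg.ae_differentiableAt
  rw [uIcc_of_le hab, ← ae_restrict_iff' measurableSet_Icc] at hdiff
  rw [← hg.integral_deriv_eq_sub]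
  calc ∫ w in a..b, deriv g w
      ≤ ∫ _ in a..b, L := intervalIntegral.integral_mono_ae_restrict hab
        hg.intervalIntegrable_deriv intervalIntegrable_const
        (by filter_upwards [hdiff, hderiv] with w h₁ h₂ using h₂ h₁)
    _ = L * (b - a) := by simp [mul_comm]

theorem LipschitzOnWith.ae_exists_eq_of_ae {u : ℝ → ℝ} {K : NNReal} {s : Set ℝ} {P : ℝ → Prop}
    (hu : LipschitzOnWith K u s) (hP : ∀ᵐ y, y ∈ s → P y) :
    ∀ᵐ w, w ∈ u '' s → ∃ y ∈ s, u y = w ∧ P y := by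
  set B := {y | y ∈ s ∧ ¬ P y}
  have hB : volume B = 0 := by
    rw [ae_iff] at hP
    simpa only [Classical.not_imp] using hP
  have huB : volume (u '' B) = 0 := by
    have := (hu.mono fun (_ : ℝ) (hy : _ ∈ B) => hy.1).hausdorffMeasure_image_le zero_le_one
    rwa [hausdorffMeasure_real, hB, mul_zero, nonpos_iff_eq_zero] at this
  filter_upwards [measure_eq_zero_iff_ae_notMem.1 huB]
  rintro _ hw ⟨y, hy, rfl⟩
  exact ⟨y, hy, rfl, by_contra fun hPy => hw ⟨y, ⟨hy, hPy⟩, rfl⟩⟩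

theorem ConcaveOn.sub_le_sub_of_le_id {σ : ℝ → ℝ} {c x y : ℝ} (hσ : ConcaveOn ℝ (Icc 0 c) σ)
    (h0 : 0 ≤ σ 0) (hy : σ y ≤ y) (hx : 0 ≤ x) (hxy : x ≤ y) (hyc : y ≤ c) :
    σ y - σ x ≤ y - x := by
  rcases hxy.eq_or_lt with rfl | hlt
  · simp
  have hy0 : 0 < y := hx.trans_lt hlt
  have hslope : slope σ y x ≤ slope σ y 0 :=
    hσ.slope_anti ⟨hy0.le, hyc⟩ ⟨⟨le_rfl, hy0.le.trans hyc⟩, hy0.ne⟩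
      ⟨⟨hx, hlt.le.trans hyc⟩, hlt.ne⟩ hx
  have hslope_le_one : slope σ 0 y ≤ 1 := by
    rw [slope_def_field, div_le_one (by linarith)]
    linarith
  rw [slope_comm σ y x, slope_comm σ y 0] at hslope
  have := hslope.trans hslope_le_one
  rwa [slope_def_field, div_le_one (sub_pos.2 hlt)] at this

theorem lipschitzOnWith_one_of_monotoneOn_of_monotoneOn_sub {f : ℝ → ℝ} {s : Set ℝ}
    (hf : MonotoneOn f s) (hsub : MonotoneOn (fun x => x - f x) s) : LipschitzOnWith 1 f s := by
  refine LipschitzOnWith.of_dist_le_mul fun x hx y hy => ?_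
  rw [NNReal.coe_one, one_mul, Real.dist_eq, Real.dist_eq, abs_le]
  have := le_abs_self (x - y)
  have := neg_abs_le (x - y)
  rcases le_total x y with hxy | hxy
  · have := hf hx hy hxy
    have := hsub hx hy hxy
    constructor <;> linarith
  · have := hf hy hx hxy
    have := hsub hy hx hxy
    constructor <;> linarith

structure IsNormalPolicy (c : ℝ) (σ : ℝ → ℝ) : Prop where
  bounds : ∀ x ∈ Icc (0 : ℝ) c, 0 ≤ σ x ∧ σ x ≤ x
  mono : MonotoneOn σ (Icc (0 : ℝ) c)
  concave : ConcaveOn ℝ (Icc (0 : ℝ) c) σ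

namespace IsNormalPolicy

variable {c : ℝ} {σ : ℝ → ℝ}

theorem mapsTo_Ici (hσ : IsNormalPolicy c σ) : MapsTo σ (Icc 0 c) (Ici 0) :=
  fun x hx => (hσ.bounds x hx).1

theorem mapsTo_sub (hσ : IsNormalPolicy c σ) : MapsTo (fun x => x - σ x) (Icc 0 c) (Icc 0 c) :=
  fun x hx => ⟨sub_nonneg.2 (hσ.bounds x hx).2, (sub_le_self x (hσ.bounds x hx).1).trans hx.2⟩

theorem monotoneOn_sub (hσ : IsNormalPolicy c σ) : MonotoneOn (fun x => x - σ x) (Icc 0 c) := by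
  intro x hx y hy hxy
  have h0 : (0 : ℝ) ∈ Icc 0 c := ⟨le_rfl, hx.1.trans hx.2⟩
  have := hσ.concave.sub_le_sub_of_le_id (hσ.bounds 0 h0).1 (hσ.bounds y hy).2 hx.1 hxy hy.2
  dsimp only
  linarith

theorem lipschitzOnWith (hσ : IsNormalPolicy c σ) : LipschitzOnWith 1 σ (Icc 0 c) :=
  lipschitzOnWith_one_of_monotoneOn_of_monotoneOn_sub hσ.mono hσ.monotoneOn_sub

theorem lipschitzOnWith_sub (hσ : IsNormalPolicy c σ) :
    LipschitzOnWith 1 (fun x => x - σ x) (Icc 0 c) :=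
  lipschitzOnWith_one_of_monotoneOn_of_monotoneOn_sub hσ.monotoneOn_sub
    (by simpa only [sub_sub_cancel] using hσ.mono)

variable {r r' g : ℝ → ℝ}

theorem value_sub_le (hσ : IsNormalPolicy c σ) (hr' : AntitoneOn r' (Ici 0)) {K : NNReal}
    (hg_lip : LipschitzOnWith K g (Icc 0 c))
    (hg_deriv : ∀ᵐ y ∂volume.restrict (Icc 0 c),
      DifferentiableAt ℝ g (y - σ y) → deriv g (y - σ y) ≤ r' (σ y))
    {x v : ℝ} (hx : x ∈ Icc 0 c) (hv : v ∈ Icc (x - σ x) (c - σ c)) :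
    g v - g (x - σ x) ≤ r' (σ x) * (v - (x - σ x)) := by
  have hxc : Icc x c ⊆ Icc 0 c := Icc_subset_Icc_left hx.1
  have hc : c ∈ Icc 0 c := ⟨hx.1.trans hx.2, le_rfl⟩
  have hsurj : Icc (x - σ x) (c - σ c) ⊆ (fun y => y - σ y) '' Icc x c :=
    intermediate_value_Icc hx.2 ((hσ.lipschitzOnWith_sub.mono hxc).continuousOn)
  have hpull := (hσ.lipschitzOnWith_sub.mono hxc).ae_exists_eq_of_ae
    (ae_imp_of_ae_restrict (ae_restrict_of_ae_restrict_of_subset hxc hg_deriv))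
  have hsub : uIcc (x - σ x) v ⊆ Icc 0 c := by
    rw [uIcc_of_le hv.1]
    exact Icc_subset_Icc (hσ.mapsTo_sub hx).1 (hv.2.trans (hσ.mapsTo_sub hc).2)
  refine (hg_lip.mono hsub).absolutelyContinuousOnInterval.sub_le_mul_sub_of_ae_deriv_le hv.1 ?_
  rw [ae_restrict_iff' measurableSet_Icc]
  filter_upwards [hpull] with w hw hwI hdiff
  obtain ⟨y, hy, rfl, hgy⟩ := hw (hsurj ⟨hwI.1, hwI.2.trans hv.2⟩)
  exact (hgy hdiff).trans
    (hr' (hσ.mapsTo_Ici hx) (hσ.mapsTo_Ici (hxc hy)) (hσ.mono hx (hxc hy) hy.1))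

theorem reward_add_value_le (hσ : IsNormalPolicy c σ) (hr : ConcaveOn ℝ (Ici 0) r)
    (hr_deriv : ∀ x ∈ Ici (0 : ℝ), HasDerivWithinAt r (r' x) (Ici 0) x) {K : NNReal}
    (hg_lip : LipschitzOnWith K g (Icc 0 c))
    (hg_deriv : ∀ᵐ y ∂volume.restrict (Icc 0 c),
      DifferentiableAt ℝ g (y - σ y) → deriv g (y - σ y) ≤ r' (σ y))
    {x s v : ℝ} (hx : x ∈ Icc 0 c) (hs : 0 ≤ s) (hv : v ∈ Icc (x - σ x) (c - σ c)) :
    r s + g v ≤ r (σ x) + g (x - σ x) + r' (σ x) * (s + v - x) := by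
  have hr_tangent := hr.le_add_mul_sub_of_hasDerivWithinAt (hσ.mapsTo_Ici hx) hs
    (hr_deriv _ (hσ.mapsTo_Ici hx))
  have hg_chord := hσ.value_sub_le (hr.antitoneOn_of_hasDerivWithinAt hr_deriv) hg_lip hg_deriv
    hx hv
  linarith

theorem concaveOn_reward_add_value (hσ : IsNormalPolicy c σ) (hr : ConcaveOn ℝ (Ici 0) r)
    (hr_deriv : ∀ x ∈ Ici (0 : ℝ), HasDerivWithinAt r (r' x) (Ici 0) x)
    (hg_concave : ConcaveOn ℝ (Icc 0 c) g) {K : NNReal} (hg_lip : LipschitzOnWith K g (Icc 0 c))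
    (hg_deriv : ∀ᵐ y ∂volume.restrict (Icc 0 c),
      DifferentiableAt ℝ g (y - σ y) → deriv g (y - σ y) ≤ r' (σ y)) :
    ConcaveOn ℝ (Icc 0 c) (fun x => r (σ x) + g (x - σ x)) := by
  refine ⟨convex_Icc 0 c, fun x₁ h₁ x₂ h₂ a b ha hb hab => ?_⟩
  have hx : a • x₁ + b • x₂ ∈ Icc 0 c := convex_Icc 0 c h₁ h₂ ha hb hab
  have hc : c ∈ Icc 0 c := ⟨h₁.1.trans h₁.2, le_rfl⟩
  have hs : a • σ x₁ + b • σ x₂ ≤ σ (a • x₁ + b • x₂) := hσ.concave.2 h₁ h₂ ha hb hab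
  have hs₀ : a • σ x₁ + b • σ x₂ ∈ Ici 0 :=
    convex_Ici 0 (hσ.mapsTo_Ici h₁) (hσ.mapsTo_Ici h₂) ha hb hab
  have hv : a • (x₁ - σ x₁) + b • (x₂ - σ x₂) ∈ Iic (c - σ c) :=
    convex_Iic _ (hσ.monotoneOn_sub h₁ hc h₁.2) (hσ.monotoneOn_sub h₂ hc h₂.2) ha hb hab
  have hr_conc := hr.2 (hσ.mapsTo_Ici h₁) (hσ.mapsTo_Ici h₂) ha hb hab
  have hg_conc := hg_concave.2 (hσ.mapsTo_sub h₁) (hσ.mapsTo_sub h₂) ha hb hab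
  have key := hσ.reward_add_value_le hr hr_deriv hg_lip hg_deriv hx hs₀
    ⟨by simp only [smul_eq_mul] at hs ⊢; linarith, hv⟩
  have hcancel : a • σ x₁ + b • σ x₂ + (a • (x₁ - σ x₁) + b • (x₂ - σ x₂)) - (a • x₁ + b • x₂)
      = 0 := by
    simp only [smul_eq_mul]; ring
  simp only [smul_eq_mul] at hr_conc hg_conc key hcancel ⊢
  rw [hcancel, mul_zero, add_zero] at key
  linarith

theorem ae_deriv_reward_add_value_le (hσ : IsNormalPolicy c σ) (hr : ConcaveOn ℝ (Ici 0) r)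
    (hr_deriv : ∀ x ∈ Ici (0 : ℝ), HasDerivWithinAt r (r' x) (Ici 0) x) {K : NNReal}
    (hg_lip : LipschitzOnWith K g (Icc 0 c))
    (hg_deriv : ∀ᵐ y ∂volume.restrict (Icc 0 c),
      DifferentiableAt ℝ g (y - σ y) → deriv g (y - σ y) ≤ r' (σ y)) :
    ∀ᵐ x ∂volume.restrict (Icc 0 c), DifferentiableAt ℝ (fun x => r (σ x) + g (x - σ x)) x →
      deriv (fun x => r (σ x) + g (x - σ x)) x ≤ r' (σ x) := by
  rw [ae_restrict_iff' measurableSet_Icc]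
  filter_upwards [measure_eq_zero_iff_ae_notMem.1 (measure_singleton c)] with x hxc hx hdiff
  have hc : c ∈ Icc 0 c := ⟨hx.1.trans hx.2, le_rfl⟩
  refine hdiff.hasDerivAt.le_of_eventually_le_add_mul_sub ?_
  filter_upwards [Ioo_mem_nhdsGT (lt_of_le_of_ne hx.2 hxc)] with y hy
  have hyI : y ∈ Icc 0 c := ⟨hx.1.trans hy.1.le, hy.2.le⟩
  have := hσ.reward_add_value_le hr hr_deriv hg_lip hg_deriv hx (hσ.mapsTo_Ici hyI)
    ⟨hσ.monotoneOn_sub hx hyI hy.1.le, hσ.monotoneOn_sub hyI hc hy.2.le⟩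
  rwa [add_sub_cancel] at this

end IsNormalPolicy

theorem iteration_lemma_general
    (r r' : ℝ → ℝ)
    (hr_mono : MonotoneOn r (Ici (0 : ℝ)))
    (hr_lip : ∃ K : NNReal, LipschitzOnWith K r (Ici (0 : ℝ)))
    (hr_concave : ConcaveOn ℝ (Ici (0 : ℝ)) r)
    (hr_deriv : ∀ x : ℝ, 0 ≤ x → HasDerivWithinAt r (r' x) (Ici (0 : ℝ)) x)
    (c : ℝ)
    (σ : ℝ → ℝ)
    (hσ_pol : ∀ x ∈ Icc (0 : ℝ) c, 0 ≤ σ x ∧ σ x ≤ x)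
    (hσ_mono : MonotoneOn σ (Icc (0 : ℝ) c))
    (hσ_concave : ConcaveOn ℝ (Icc (0 : ℝ) c) σ)
    (g : ℝ → ℝ)
    (hg_mono : MonotoneOn g (Icc (0 : ℝ) c))
    (hg_lip : ∃ K : NNReal, LipschitzOnWith K g (Icc (0 : ℝ) c))
    (hg_concave : ConcaveOn ℝ (Icc (0 : ℝ) c) g)
    (hg_deriv : ∀ᵐ x ∂(volume.restrict (Icc (0 : ℝ) c)),
      DifferentiableAt ℝ g (x - σ x) → deriv g (x - σ x) ≤ r' (σ x)) :
    MonotoneOn (fun x => r (σ x) + g (x - σ x)) (Icc (0 : ℝ) c) ∧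
      (∃ K : NNReal, LipschitzOnWith K (fun x => r (σ x) + g (x - σ x)) (Icc (0 : ℝ) c)) ∧
      ConcaveOn ℝ (Icc (0 : ℝ) c) (fun x => r (σ x) + g (x - σ x)) ∧
      (∀ᵐ x ∂(volume.restrict (Icc (0 : ℝ) c)),
        DifferentiableAt ℝ (fun x => r (σ x) + g (x - σ x)) x →
          deriv (fun x => r (σ x) + g (x - σ x)) x ≤ r' (σ x)) := by
  obtain ⟨Kr, hKr⟩ := hr_lip
  obtain ⟨Kg, hKg⟩ := hg_lip
  have hσ : IsNormalPolicy c σ := ⟨hσ_pol, hσ_mono, hσ_concave⟩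
  refine ⟨?_, ⟨Kr + Kg, ?_⟩, hσ.concaveOn_reward_add_value hr_concave hr_deriv hg_concave hKg
    hg_deriv, hσ.ae_deriv_reward_add_value_le hr_concave hr_deriv hKg hg_deriv⟩
  · exact (hr_mono.comp hσ.mono hσ.mapsTo_Ici).add (hg_mono.comp hσ.monotoneOn_sub hσ.mapsTo_sub)
  · simpa only [mul_one, Function.comp_def] using (hKr.comp hσ.lipschitzOnWith hσ.mapsTo_Ici).add
      (hKg.comp hσ.lipschitzOnWith_sub hσ.mapsTo_sub)

/-- **Key iteration lemma** (Lemma 1). Let `r` be a reward function differentiable on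
`[0, ∞)` with derivative `r'`, `σ` a normal stationary policy on `[0, c]`, and
`g` nondecreasing, Lipschitz, and concave on `[0, c]` such that for a.e. `x ∈ [0, c]` at
which `g` is differentiable at `x - σ x` one has `g' (x - σ x) ≤ r' (σ x)`. Then
`h x := r (σ x) + g (x - σ x)` is nondecreasing, Lipschitz, and concave on `[0, c]`, and
for a.e. `x ∈ [0, c]` at which `h` is differentiable, `h' x ≤ r' (σ x)`. -/
theorem iteration_lemma
    (r r' : ℝ → ℝ)
    (hr_zero : r 0 = 0)
    (hr_nonneg : ∀ x : ℝ, 0 ≤ x → 0 ≤ r x)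
    (hr_mono : MonotoneOn r (Ici (0 : ℝ)))
    (hr_lip : ∃ K : NNReal, LipschitzOnWith K r (Ici (0 : ℝ)))
    (hr_concave : ConcaveOn ℝ (Ici (0 : ℝ)) r)
    (hr_deriv : ∀ x : ℝ, 0 ≤ x → HasDerivWithinAt r (r' x) (Ici (0 : ℝ)) x)
    (c : ℝ) (hc : 0 < c)
    (σ : ℝ → ℝ)
    (hσ_pol : ∀ x ∈ Icc (0 : ℝ) c, 0 ≤ σ x ∧ σ x ≤ x)
    (hσ_mono : MonotoneOn σ (Icc (0 : ℝ) c))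
    (hσ_concave : ConcaveOn ℝ (Icc (0 : ℝ) c) σ)
    (g : ℝ → ℝ)
    (hg_mono : MonotoneOn g (Icc (0 : ℝ) c))
    (hg_lip : ∃ K : NNReal, LipschitzOnWith K g (Icc (0 : ℝ) c))
    (hg_concave : ConcaveOn ℝ (Icc (0 : ℝ) c) g)
    (hg_deriv : ∀ᵐ x ∂(volume.restrict (Icc (0 : ℝ) c)),
      DifferentiableAt ℝ g (x - σ x) → deriv g (x - σ x) ≤ r' (σ x)) :
    MonotoneOn (fun x => r (σ x) + g (x - σ x)) (Icc (0 : ℝ) c) ∧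
      (∃ K : NNReal, LipschitzOnWith K (fun x => r (σ x) + g (x - σ x)) (Icc (0 : ℝ) c)) ∧
      ConcaveOn ℝ (Icc (0 : ℝ) c) (fun x => r (σ x) + g (x - σ x)) ∧
      (∀ᵐ x ∂(volume.restrict (Icc (0 : ℝ) c)),
        DifferentiableAt ℝ (fun x => r (σ x) + g (x - σ x)) x →
          deriv (fun x => r (σ x) + g (x - σ x)) x ≤ r' (σ x)) :=
  iteration_lemma_general r r' hr_mono hr_lip hr_concave hr_deriv c σ hσ_pol hσ_mono hσ_concave g
    hg_mono hg_lip hg_concave hg_deriv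
end

section
/- Let r be a regular reward function and s > 1. For i ≥ 0 let κ̄_s^{(i)} denote the i-fold iterate of κ̄_s (with κ̄_s^{(0)}(x) = x), and let τ_s^{(i)} be the unique point with r'(τ_s^{(i)}) = r'(0)/s^i. Then: (i) for every i ≥ 0 and x ≥ 0, κ̄_s^{(i)}(x) = κ_{s^i}(max(x, τ_s^{(i)})); and (ii) for every x ≥ 0, the least nonnegative integer i with κ̄_s^{(i)}(x) = 0 equals M_s(x) := ⌈ln(r'(0)/r'(x)) / ln s⌉. -/
open Set Filter MeasureTheory

/-- A regular reward function `r` with derivative `r'`: `r : [0,∞) → [0,∞)` is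
nondecreasing, Lipschitz, strictly concave, differentiable, with `r 0 = 0`; its
derivative `r'` is continuous, strictly decreasing, positive, and tends to `0` at `+∞`.
For each `s ≥ 1`, `τ s` is the unique point with `r' (τ s) = r' 0 / s`, and
`κ s : [τ s, ∞) → [0, ∞)` is defined by the relation `r' (κ s x) = s * r' x`
(for `s = 1` these reduce to `τ 1 = 0` and `κ 1 = id`); regularity means `κ s` is
convex on `[τ s, ∞)` for all `s > 1`. -/
structure RegularReward where
  r : ℝ → ℝ
  r' : ℝ → ℝ
  r_zero : r 0 = 0
  r_nonneg : ∀ x : ℝ, 0 ≤ x → 0 ≤ r x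
  r_mono : MonotoneOn r (Ici (0 : ℝ))
  r_lip : ∃ K : NNReal, LipschitzOnWith K r (Ici (0 : ℝ))
  r_strictConcave : StrictConcaveOn ℝ (Ici (0 : ℝ)) r
  r_hasDeriv : ∀ x : ℝ, 0 ≤ x → HasDerivWithinAt r (r' x) (Ici (0 : ℝ)) x
  deriv_cont : ContinuousOn r' (Ici (0 : ℝ))
  deriv_strictAnti : StrictAntiOn r' (Ici (0 : ℝ))
  deriv_pos : ∀ x : ℝ, 0 ≤ x → 0 < r' x
  deriv_tendsto_zero : Tendsto r' atTop (nhds 0)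
  τ : ℝ → ℝ
  κ : ℝ → ℝ → ℝ
  τ_nonneg : ∀ s : ℝ, 1 ≤ s → 0 ≤ τ s
  τ_spec : ∀ s : ℝ, 1 ≤ s → r' (τ s) = r' 0 / s
  κ_nonneg : ∀ s : ℝ, 1 ≤ s → ∀ x : ℝ, τ s ≤ x → 0 ≤ κ s x
  κ_spec : ∀ s : ℝ, 1 ≤ s → ∀ x : ℝ, τ s ≤ x → r' (κ s x) = s * r' x
  κ_convex : ∀ s : ℝ, 1 < s → ConvexOn ℝ (Ici (τ s)) (κ s)

namespace RegularReward

/-- The extension `κ̄_s (x) := κ_s (max x τ_s)` of `κ_s` to `[0, ∞)`. -/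
noncomputable def kbar (R : RegularReward) (s : ℝ) (x : ℝ) : ℝ :=
  R.κ s (max x (R.τ s))

/-- `M_s(x) = ⌈ln (r' 0 / r' x) / ln s⌉`. -/
noncomputable def M (R : RegularReward) (s : ℝ) (x : ℝ) : ℕ :=
  ⌈Real.log (R.r' 0 / R.r' x) / Real.log s⌉₊

/-- `M̃_s(x) = ⌊ln (r' 0 / r' x) / ln s⌋ + 1`. -/
noncomputable def Mt (R : RegularReward) (s : ℝ) (x : ℝ) : ℕ :=
  ⌊Real.log (R.r' 0 / R.r' x) / Real.log s⌋₊ + 1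

/-- `η_s(x) := ∑_{i=1}^∞ κ̄_s^{(i-1)}(x)`, a finite sum since `κ̄_s^{(i)}(x) = 0` for
`i ≥ M_s(x)`. -/
noncomputable def η (R : RegularReward) (s : ℝ) (x : ℝ) : ℝ :=
  ∑' i : ℕ, (R.kbar s)^[i] x

end RegularReward

/-! Everything reduces to comparing values of the strictly decreasing `r'`, which `τ_t` and
`κ_t` only rescale: `r' (τ_t) = r' 0 / t` and `r' (κ_t x) = t · r' x`. Hence
`x ≤ τ_t ↔ r' 0 ≤ t · r' x`, and `κ̄_s ∘ κ_t (max · τ_t) = κ_{t s} (max · τ_{t s})`,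
so by induction `κ̄_s^{(i)} = κ_{s^i} (max · τ_{s^i})`. This vanishes exactly when `x ≤ τ_{s^i}`,
i.e. when `r' 0 / r' x ≤ s^i`, i.e. when `i ≥ ln (r' 0 / r' x) / ln s`. -/

namespace RegularReward

variable (R : RegularReward) {s t x y : ℝ}

theorem r'_le_r'_iff (hx : 0 ≤ x) (hy : 0 ≤ y) : R.r' x ≤ R.r' y ↔ y ≤ x :=
  R.deriv_strictAnti.le_iff_ge hx hy

theorem le_τ_iff (hx : 0 ≤ x) (ht : 1 ≤ t) : x ≤ R.τ t ↔ R.r' 0 ≤ t * R.r' x := by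
  rw [← R.r'_le_r'_iff (R.τ_nonneg t ht) hx, R.τ_spec t ht,
    div_le_iff₀ (zero_lt_one.trans_le ht), mul_comm]

theorem τ_le_iff (hx : 0 ≤ x) (ht : 1 ≤ t) : R.τ t ≤ x ↔ t * R.r' x ≤ R.r' 0 := by
  rw [← R.r'_le_r'_iff hx (R.τ_nonneg t ht), R.τ_spec t ht,
    le_div_iff₀ (zero_lt_one.trans_le ht), mul_comm]

theorem τ_one : R.τ 1 = 0 :=
  R.deriv_strictAnti.injOn (R.τ_nonneg 1 le_rfl) (le_refl (0 : ℝ))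
    (by rw [R.τ_spec 1 le_rfl, div_one])

theorem κ_one (hx : 0 ≤ x) : R.κ 1 x = x :=
  R.deriv_strictAnti.injOn (R.κ_nonneg 1 le_rfl x (R.τ_one ▸ hx)) hx
    (by rw [R.κ_spec 1 le_rfl x (R.τ_one ▸ hx), one_mul])

theorem κ_τ (ht : 1 ≤ t) : R.κ t (R.τ t) = 0 := by
  refine R.deriv_strictAnti.injOn (R.κ_nonneg t ht _ le_rfl) (le_refl (0 : ℝ)) ?_
  rw [R.κ_spec t ht _ le_rfl, R.τ_spec t ht, mul_div_cancel₀ _ (zero_lt_one.trans_le ht).ne']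

theorem τ_le_τ_mul (ht : 1 ≤ t) (hs : 1 ≤ s) : R.τ t ≤ R.τ (t * s) := by
  have hts : 1 ≤ t * s := one_le_mul_of_one_le_of_one_le ht hs
  rw [R.τ_le_iff (R.τ_nonneg _ hts) ht, R.τ_spec _ hts]
  calc t * (R.r' 0 / (t * s)) = R.r' 0 / s := by field_simp
    _ ≤ R.r' 0 := div_le_self (R.deriv_pos 0 le_rfl).le hs

theorem κ_max_eq_zero_iff (hx : 0 ≤ x) (ht : 1 ≤ t) :
    R.κ t (max x (R.τ t)) = 0 ↔ x ≤ R.τ t := by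
  refine ⟨fun h => ?_, fun h => by rw [max_eq_right h, R.κ_τ ht]⟩
  have hspec := R.κ_spec t ht _ (le_max_right x (R.τ t))
  rw [h] at hspec
  have hmax : max x (R.τ t) ≤ R.τ t :=
    (R.le_τ_iff (hx.trans (le_max_left _ _)) ht).2 hspec.le
  exact (le_max_left _ _).trans hmax

theorem kbar_κ_max (hx : 0 ≤ x) (ht : 1 ≤ t) (hs : 1 ≤ s) :
    R.kbar s (R.κ t (max x (R.τ t))) = R.κ (t * s) (max x (R.τ (t * s))) := by
  have hts : 1 ≤ t * s := one_le_mul_of_one_le_of_one_le ht hs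
  set y := max x (R.τ t)
  have hyτ : R.τ t ≤ y := le_max_right _ _
  have hy : 0 ≤ y := hx.trans (le_max_left _ _)
  have hz : 0 ≤ R.κ t y := R.κ_nonneg t ht y hyτ
  have hr'z : R.r' (R.κ t y) = t * R.r' y := R.κ_spec t ht y hyτ
  rcases le_total (R.τ (t * s)) x with hτx | hxτ
  · have hyx : y = x := max_eq_left ((R.τ_le_τ_mul ht hs).trans hτx)
    have hzτ : R.τ s ≤ R.κ t y := by
      rw [R.τ_le_iff hz hs, hr'z, hyx, ← mul_assoc, mul_comm s t]
      exact (R.τ_le_iff hx hts).1 hτx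
    rw [kbar, max_eq_left hzτ, max_eq_left hτx]
    refine R.deriv_strictAnti.injOn (R.κ_nonneg s hs _ hzτ) (R.κ_nonneg _ hts x hτx) ?_
    rw [R.κ_spec s hs _ hzτ, R.κ_spec _ hts x hτx, hr'z, hyx]
    ring
  · have hyτ' : y ≤ R.τ (t * s) := max_le hxτ (R.τ_le_τ_mul ht hs)
    have hzτ : R.κ t y ≤ R.τ s := by
      rw [R.le_τ_iff hz hs, hr'z, ← mul_assoc, mul_comm s t]
      exact (R.le_τ_iff hy hts).1 hyτ'
    rw [kbar, max_eq_right hzτ, max_eq_right hxτ, R.κ_τ hs, R.κ_τ hts]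

theorem kbar_iterate (hs : 1 ≤ s) (hx : 0 ≤ x) (i : ℕ) :
    (R.kbar s)^[i] x = R.κ (s ^ i) (max x (R.τ (s ^ i))) := by
  induction i with
  | zero => rw [Function.iterate_zero_apply, pow_zero, R.τ_one, max_eq_left hx, R.κ_one hx]
  | succ i ih =>
    rw [Function.iterate_succ_apply', ih, R.kbar_κ_max hx (one_le_pow₀ hs) hs, pow_succ]

theorem le_τ_pow_iff (hs : 1 < s) (hx : 0 ≤ x) (i : ℕ) :
    x ≤ R.τ (s ^ i) ↔ Real.log (R.r' 0 / R.r' x) / Real.log s ≤ i := by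
  have hr'x := R.deriv_pos x hx
  rw [R.le_τ_iff hx (one_le_pow₀ hs.le), div_le_iff₀ (Real.log_pos hs), ← Real.log_pow,
    Real.log_le_log_iff (div_pos (R.deriv_pos 0 le_rfl) hr'x) (pow_pos (zero_lt_one.trans hs) i),
    div_le_iff₀ hr'x]

end RegularReward

/-- **Iterates of `κ̄_s`** (Proposition 6, parts 3–4). For a regular reward function and
`s > 1`: (i) for every `i ≥ 0` and `x ≥ 0`, `κ̄_s^{(i)}(x) = κ_{s^i}(max x τ_s^{(i)})`,
where `τ_s^{(i)} = τ (s^i)` is the unique point with `r' (τ_s^{(i)}) = r' 0 / s^i`;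
(ii) for every `x ≥ 0`, the least nonnegative integer `i` with `κ̄_s^{(i)}(x) = 0`
equals `M_s(x) = ⌈ln (r' 0 / r' x) / ln s⌉`. -/
theorem kbar_iterate_properties (R : RegularReward) (s : ℝ) (hs : 1 < s) :
    (∀ i : ℕ, ∀ x : ℝ, 0 ≤ x →
        (R.kbar s)^[i] x = R.κ (s ^ i) (max x (R.τ (s ^ i)))) ∧
      (∀ x : ℝ, 0 ≤ x →
        IsLeast {i : ℕ | (R.kbar s)^[i] x = 0} (R.M s x)) := by
  refine ⟨fun i x hx => R.kbar_iterate hs.le hx i, fun x hx => ?_⟩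
  have hzeros : {i : ℕ | (R.kbar s)^[i] x = 0} = Ici (R.M s x) := by
    ext i
    rw [mem_ofPred_eq, R.kbar_iterate hs.le hx, R.κ_max_eq_zero_iff hx (one_le_pow₀ hs.le),
      R.le_τ_pow_iff hs hx, mem_Ici, RegularReward.M, Nat.ceil_le]
  exact hzeros ▸ isLeast_Ici
end

section
/- Let r be a regular reward function and s > 1. Define η_s(x) := Σ_{i=1}^∞ κ̄_s^{(i−1)}(x) (a finite sum, since κ̄_s^{(i)}(x) = 0 for i ≥ M_s(x)). Then: (i) η_s(x) = Σ_{i=1}^N κ̄_s^{(i−1)}(x) for every N ≥ M_s(x); (ii) η_s is continuous, strictly increasing, and convex on [0,∞); and (iii) η_s(x) = Σ_{i=1}^{M_s(x)} κ_{s^{i−1}}(x) = Σ_{i=1}^{M̃_s(x)} κ_{s^{i−1}}(x), where M_s(x) := ⌈ln(r'(0)/r'(x)) / ln s⌉ and M̃_s(x) := ⌊ln(r'(0)/r'(x)) / ln s⌋ + 1. -/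
open Set Filter MeasureTheory
open Topology

namespace RegularReward

variable (R : RegularReward)

lemma anti_mono {a b : ℝ} (ha : 0 ≤ a) (hab : a ≤ b) : R.r' b ≤ R.r' a := by
  rcases hab.lt_or_eq with h | h
  · exact (R.deriv_strictAnti ha (ha.trans hab) h).le
  · rw [h]

lemma anti_le {a b : ℝ} (ha : 0 ≤ a) (hb : 0 ≤ b) (h : R.r' b ≤ R.r' a) : a ≤ b := by
  by_contra hlt
  push_neg at hlt
  exact absurd h (not_le.2 (R.deriv_strictAnti hb ha hlt))

lemma r'_injOn {a b : ℝ} (ha : 0 ≤ a) (hb : 0 ≤ b) (h : R.r' a = R.r' b) : a = b :=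
  R.deriv_strictAnti.injOn ha hb h

lemma tau_le_iff {s : ℝ} (hs1 : 1 ≤ s) {x : ℝ} (hx : 0 ≤ x) :
    R.τ s ≤ x ↔ R.r' x ≤ R.r' 0 / s := by
  rw [← R.τ_spec s hs1]
  constructor
  · exact fun h => R.anti_mono (R.τ_nonneg s hs1) h
  · exact fun h => R.anti_le (R.τ_nonneg s hs1) hx h

lemma tau_pos {s : ℝ} (hs : 1 < s) : 0 < R.τ s := by
  rcases (R.τ_nonneg s hs.le).lt_or_eq with h | h
  · exact h
  · exfalso
    have hspec := R.τ_spec s hs.le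
    rw [← h] at hspec
    have hp := R.deriv_pos 0 le_rfl
    rw [eq_div_iff (by positivity : s ≠ 0)] at hspec
    nlinarith

lemma kbar_nonneg {s : ℝ} (hs1 : 1 ≤ s) (x : ℝ) : 0 ≤ R.kbar s x :=
  R.κ_nonneg s hs1 _ (le_max_right _ _)

lemma r'_kbar {s : ℝ} (hs1 : 1 ≤ s) (x : ℝ) :
    R.r' (R.kbar s x) = s * R.r' (max x (R.τ s)) :=
  R.κ_spec s hs1 _ (le_max_right _ _)

lemma kbar_eq_zero {s : ℝ} (hs1 : 1 ≤ s) {x : ℝ} (hx : x ≤ R.τ s) :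
    R.kbar s x = 0 := by
  have hs0 : s ≠ 0 := by positivity
  unfold kbar
  rw [max_eq_right hx]
  apply R.r'_injOn (R.κ_nonneg s hs1 _ le_rfl) le_rfl
  rw [R.κ_spec s hs1 _ le_rfl, R.τ_spec s hs1, mul_div_cancel₀ _ hs0]

lemma kbar_mono {s : ℝ} (hs1 : 1 ≤ s) : Monotone (R.kbar s) := by
  intro a b hab
  have hτ0 : 0 ≤ R.τ s := R.τ_nonneg s hs1
  apply R.anti_le (R.kbar_nonneg hs1 a) (R.kbar_nonneg hs1 b)
  rw [R.r'_kbar hs1, R.r'_kbar hs1]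
  have : R.r' (max b (R.τ s)) ≤ R.r' (max a (R.τ s)) :=
    R.anti_mono (le_trans hτ0 (le_max_right _ _)) (max_le_max hab le_rfl)
  nlinarith

lemma kappa_mono {s : ℝ} (hs1 : 1 ≤ s) {a b : ℝ} (ha : R.τ s ≤ a) (hab : a ≤ b) :
    R.κ s a ≤ R.κ s b := by
  have hτ0 : 0 ≤ R.τ s := R.τ_nonneg s hs1
  apply R.anti_le (R.κ_nonneg s hs1 a ha) (R.κ_nonneg s hs1 b (ha.trans hab))
  rw [R.κ_spec s hs1 a ha, R.κ_spec s hs1 b (ha.trans hab)]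
  have : R.r' b ≤ R.r' a := R.anti_mono (hτ0.trans ha) hab
  nlinarith

lemma kbar_convexOn {s : ℝ} (hs : 1 < s) : ConvexOn ℝ (Ici (0 : ℝ)) (R.kbar s) := by
  refine ⟨convex_Ici 0, fun x hx y hy a b ha hb hab => ?_⟩
  have hτ0 : 0 ≤ R.τ s := R.τ_nonneg s hs.le
  simp only [smul_eq_mul] at *
  have hmx : R.τ s ≤ max x (R.τ s) := le_max_right _ _
  have hmy : R.τ s ≤ max y (R.τ s) := le_max_right _ _
  have h1 : max (a * x + b * y) (R.τ s) ≤ a * max x (R.τ s) + b * max y (R.τ s) := by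
    apply max_le
    · exact add_le_add (mul_le_mul_of_nonneg_left (le_max_left _ _) ha)
        (mul_le_mul_of_nonneg_left (le_max_left _ _) hb)
    · calc R.τ s = a * R.τ s + b * R.τ s := by rw [← add_mul, hab, one_mul]
        _ ≤ _ := add_le_add (mul_le_mul_of_nonneg_left (le_max_right _ _) ha)
            (mul_le_mul_of_nonneg_left (le_max_right _ _) hb)
  have h2 : R.κ s (max (a * x + b * y) (R.τ s)) ≤
      R.κ s (a * max x (R.τ s) + b * max y (R.τ s)) :=
    R.kappa_mono hs.le (le_max_right _ _) h1
  have h3 := (R.κ_convex s hs).2 hmx hmy ha hb hab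
  simp only [smul_eq_mul] at h3
  simp only [RegularReward.kbar]
  exact h2.trans h3

lemma iter_nonneg {s : ℝ} (hs1 : 1 ≤ s) {x : ℝ} (hx : 0 ≤ x) (i : ℕ) :
    0 ≤ (R.kbar s)^[i] x := by
  cases i with
  | zero => exact hx
  | succ i => rw [Function.iterate_succ_apply']; exact R.kbar_nonneg hs1 _

lemma iter_convexOn {s : ℝ} (hs : 1 < s) (i : ℕ) :
    ConvexOn ℝ (Ici (0 : ℝ)) ((R.kbar s)^[i]) := by
  induction i with
  | zero => simpa using convexOn_id (convex_Ici (0 : ℝ))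
  | succ i ih =>
    refine ⟨convex_Ici 0, fun x hx y hy a b ha hb hab => ?_⟩
    simp only [Function.iterate_succ_apply']
    have h1 : (R.kbar s)^[i] (a • x + b • y) ≤
        a • (R.kbar s)^[i] x + b • (R.kbar s)^[i] y := ih.2 hx hy ha hb hab
    refine (R.kbar_mono hs.le h1).trans ?_
    exact (R.kbar_convexOn hs).2 (R.iter_nonneg hs.le hx i) (R.iter_nonneg hs.le hy i)
      ha hb hab

/-- Key iteration lemma. -/
lemma iter_spec {s : ℝ} (hs : 1 < s) {x : ℝ} (hx : 0 ≤ x) (i : ℕ) :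
    (s ^ i * R.r' x ≤ R.r' 0 →
      R.τ (s ^ i) ≤ x ∧ (R.kbar s)^[i] x = R.κ (s ^ i) x ∧
        R.r' ((R.kbar s)^[i] x) = s ^ i * R.r' x) ∧
    (R.r' 0 < s ^ i * R.r' x → (R.kbar s)^[i] x = 0) := by
  have hs1 : (1 : ℝ) ≤ s := hs.le
  have hsp : (0 : ℝ) < s := by linarith
  have hrx : 0 < R.r' x := R.deriv_pos x hx
  have hr0 : 0 < R.r' 0 := R.deriv_pos 0 le_rfl
  have hrx0 : R.r' x ≤ R.r' 0 := R.anti_mono le_rfl hx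
  induction i with
  | zero =>
    constructor
    · intro _
      have hτ1 : R.τ 1 = 0 := by
        apply R.r'_injOn (R.τ_nonneg 1 le_rfl) le_rfl
        rw [R.τ_spec 1 le_rfl, div_one]
      have hx1 : R.τ 1 ≤ x := hτ1 ▸ hx
      have hκ1 : R.κ 1 x = x := by
        apply R.r'_injOn (R.κ_nonneg 1 le_rfl x hx1) hx
        rw [R.κ_spec 1 le_rfl x hx1, one_mul]
      simp [pow_zero, hτ1, hx, hκ1]
    · intro h
      rw [pow_zero, one_mul] at h
      linarith
  | succ i ih =>
    have hpow : (0 : ℝ) < s ^ i := pow_pos hsp i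
    have hpow1 : (1 : ℝ) ≤ s ^ i := one_le_pow₀ hs1
    have hpow1' : (1 : ℝ) ≤ s ^ (i + 1) := one_le_pow₀ hs1
    constructor
    · intro h
      have hssi : s ^ (i + 1) = s * s ^ i := by ring
      rw [hssi] at h
      have hi : s ^ i * R.r' x ≤ R.r' 0 := by nlinarith
      obtain ⟨hτi, hiter, hr⟩ := ih.1 hi
      set y := (R.kbar s)^[i] x with hy
      have hy0 : 0 ≤ y := R.iter_nonneg hs1 hx i
      have hyτ : R.τ s ≤ y := by
        rw [R.tau_le_iff hs1 hy0, hr, le_div_iff₀ hsp]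
        nlinarith
      have hk : (R.kbar s)^[i + 1] x = R.κ s y := by
        rw [Function.iterate_succ_apply', ← hy]
        unfold kbar
        rw [max_eq_left hyτ]
      have hr2 : R.r' ((R.kbar s)^[i + 1] x) = s ^ (i + 1) * R.r' x := by
        rw [hk, R.κ_spec s hs1 y hyτ, hr]; ring
      have hτs : R.τ (s ^ (i + 1)) ≤ x := by
        rw [R.tau_le_iff hpow1' hx, le_div_iff₀ (by positivity)]
        nlinarith
      refine ⟨hτs, ?_, hr2⟩
      apply R.r'_injOn (hk ▸ R.κ_nonneg s hs1 y hyτ) (R.κ_nonneg _ hpow1' x hτs)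
      rw [hr2, R.κ_spec _ hpow1' x hτs]
    · intro h
      by_cases hi : s ^ i * R.r' x ≤ R.r' 0
      · obtain ⟨hτi, hiter, hr⟩ := ih.1 hi
        set y := (R.kbar s)^[i] x with hy
        have hy0 : 0 ≤ y := R.iter_nonneg hs1 hx i
        have hssi : s ^ (i + 1) = s * s ^ i := by ring
        rw [hssi] at h
        have hylt : y < R.τ s := by
          by_contra hc
          push_neg at hc
          rw [R.tau_le_iff hs1 hy0, hr, le_div_iff₀ hsp] at hc
          nlinarith
        rw [Function.iterate_succ_apply', ← hy]
        exact R.kbar_eq_zero hs1 hylt.le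
      · rw [Function.iterate_succ_apply', ih.2 (not_le.1 hi)]
        exact R.kbar_eq_zero hs1 (R.τ_nonneg s hs1)

lemma pow_mul_le_iff {s : ℝ} (hs : 1 < s) {x : ℝ} (hx : 0 ≤ x) (i : ℕ) :
    s ^ i * R.r' x ≤ R.r' 0 ↔
      (i : ℝ) ≤ Real.log (R.r' 0 / R.r' x) / Real.log s := by
  have hrx : 0 < R.r' x := R.deriv_pos x hx
  have hr0 : 0 < R.r' 0 := R.deriv_pos 0 le_rfl
  have hlogs : 0 < Real.log s := Real.log_pos hs
  have hsp : (0 : ℝ) < s := by linarith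
  rw [le_div_iff₀ hlogs, ← Real.log_pow,
    Real.log_le_log_iff (pow_pos hsp i) (div_pos hr0 hrx), le_div_iff₀ hrx]

lemma le_pow_mul_iff {s : ℝ} (hs : 1 < s) {x : ℝ} (hx : 0 ≤ x) (i : ℕ) :
    R.r' 0 ≤ s ^ i * R.r' x ↔
      Real.log (R.r' 0 / R.r' x) / Real.log s ≤ (i : ℝ) := by
  have hrx : 0 < R.r' x := R.deriv_pos x hx
  have hr0 : 0 < R.r' 0 := R.deriv_pos 0 le_rfl
  have hlogs : 0 < Real.log s := Real.log_pos hs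
  have hsp : (0 : ℝ) < s := by linarith
  rw [div_le_iff₀ hlogs, ← Real.log_pow,
    Real.log_le_log_iff (div_pos hr0 hrx) (pow_pos hsp i), div_le_iff₀ hrx]

lemma iter_eq_zero {s : ℝ} (hs : 1 < s) {x : ℝ} (hx : 0 ≤ x) {i : ℕ}
    (hi : R.M s x ≤ i) : (R.kbar s)^[i] x = 0 := by
  have h2 : R.r' 0 ≤ s ^ i * R.r' x := by
    rw [R.le_pow_mul_iff hs hx i]
    exact_mod_cast Nat.ceil_le.1 hi
  rcases h2.lt_or_eq with h | h
  · exact (R.iter_spec hs hx i).2 h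
  · obtain ⟨hτ, hit, hr⟩ := (R.iter_spec hs hx i).1 h.ge
    apply R.r'_injOn (R.iter_nonneg hs.le hx i) le_rfl
    rw [hr, ← h]

lemma eta_eq_sum {s : ℝ} (hs : 1 < s) {x : ℝ} (hx : 0 ≤ x) {N : ℕ}
    (hN : R.M s x ≤ N) :
    R.η s x = ∑ i ∈ Finset.range N, (R.kbar s)^[i] x := by
  apply tsum_eq_sum
  intro i hi
  have : N ≤ i := le_of_not_gt (fun h => hi (Finset.mem_range.2 h))
  exact R.iter_eq_zero hs hx (hN.trans this)

end RegularReward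

/-- **Properties of `η_s`** (Proposition 7). For a regular reward function and `s > 1`:
(i) `η_s(x) = ∑_{i=1}^N κ̄_s^{(i-1)}(x)` for every `N ≥ M_s(x)`;
(ii) `η_s` is continuous, strictly increasing, and convex on `[0, ∞)`;
(iii) `η_s(x) = ∑_{i=1}^{M_s(x)} κ_{s^{i-1}}(x) = ∑_{i=1}^{M̃_s(x)} κ_{s^{i-1}}(x)`. -/
theorem eta_properties (R : RegularReward) (s : ℝ) (hs : 1 < s) :
    (∀ x : ℝ, 0 ≤ x → ∀ N : ℕ, R.M s x ≤ N →
        R.η s x = ∑ i ∈ Finset.range N, (R.kbar s)^[i] x) ∧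
      (ContinuousOn (R.η s) (Ici (0 : ℝ)) ∧
        StrictMonoOn (R.η s) (Ici (0 : ℝ)) ∧
        ConvexOn ℝ (Ici (0 : ℝ)) (R.η s)) ∧
      (∀ x : ℝ, 0 ≤ x →
        R.η s x = ∑ i ∈ Finset.range (R.M s x), R.κ (s ^ i) x ∧
          R.η s x = ∑ i ∈ Finset.range (R.Mt s x), R.κ (s ^ i) x) := by
  have hs1 : (1 : ℝ) ≤ s := hs.le
  have hlogs : 0 < Real.log s := Real.log_pos hs
  have hr0 : 0 < R.r' 0 := R.deriv_pos 0 le_rfl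
  have part1 : ∀ x : ℝ, 0 ≤ x → ∀ N : ℕ, R.M s x ≤ N →
      R.η s x = ∑ i ∈ Finset.range N, (R.kbar s)^[i] x :=
    fun x hx N hN => R.eta_eq_sum hs hx hN
  have hconv : ConvexOn ℝ (Ici (0 : ℝ)) (R.η s) := by
    refine ⟨convex_Ici 0, fun x hx y hy a b ha hb hab => ?_⟩
    have hz : a • x + b • y ∈ Ici (0 : ℝ) := (convex_Ici (0 : ℝ)) hx hy ha hb hab
    set N := max (max (R.M s x) (R.M s y)) (R.M s (a • x + b • y)) with hN
    rw [part1 _ hz N (le_max_right _ _),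
      part1 x hx N ((le_max_left _ _).trans (le_max_left _ _)),
      part1 y hy N ((le_max_right _ _).trans (le_max_left _ _)),
      Finset.smul_sum, Finset.smul_sum, ← Finset.sum_add_distrib]
    apply Finset.sum_le_sum
    intro i _
    exact (R.iter_convexOn hs i).2 hx hy ha hb hab
  have hmono : StrictMonoOn (R.η s) (Ici (0 : ℝ)) := by
    intro x hx y hy hxy
    set N := max (max (R.M s x) (R.M s y)) 1 with hN
    rw [part1 x hx N ((le_max_left _ _).trans (le_max_left _ _)),
      part1 y hy N ((le_max_right _ _).trans (le_max_left _ _))]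
    apply Finset.sum_lt_sum
    · intro i _
      exact (R.kbar_mono hs.le).iterate i hxy.le
    · exact ⟨0, Finset.mem_range.2 (lt_of_lt_of_le Nat.zero_lt_one (le_max_right _ _)),
        by simpa using hxy⟩
  have hcont : ContinuousOn (R.η s) (Ici (0 : ℝ)) := by
    intro x hx
    rcases (mem_Ici.1 hx).lt_or_eq with hx0 | hx0
    · have hoc : ConvexOn ℝ (Ioi (0 : ℝ)) (R.η s) :=
        hconv.subset Ioi_subset_Ici_self (convex_Ioi 0)
      exact ((hoc.continuousOn isOpen_Ioi).continuousAt
        (isOpen_Ioi.mem_nhds hx0)).continuousWithinAt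
    · have hτp := R.tau_pos hs
      have hM0 : R.M s 0 = 0 := by
        unfold RegularReward.M
        rw [div_self (R.deriv_pos 0 le_rfl).ne', Real.log_one, zero_div, Nat.ceil_zero]
      have hη0 : R.η s 0 = 0 := by
        rw [part1 0 le_rfl 0 hM0.le]
        simp
      have heq : ∀ y, y < R.τ s → (0 : ℝ) ≤ y → R.η s y = y := by
        intro y hy1 hy2
        have hry : 0 < R.r' y := R.deriv_pos y hy2
        have hrgt : R.r' 0 / s < R.r' y := by
          rw [← R.τ_spec s hs.le]
          exact R.deriv_strictAnti hy2 (R.τ_nonneg s hs.le) hy1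
        have hM1 : R.M s y ≤ 1 := by
          apply Nat.ceil_le.2
          push_cast
          rw [div_le_one hlogs]
          rw [Real.log_le_log_iff (div_pos hr0 hry) (by linarith : (0:ℝ) < s),
            div_le_iff₀ hry]
          rw [div_lt_iff₀ (by linarith : (0:ℝ) < s)] at hrgt
          nlinarith
        rw [part1 y hy2 1 hM1]
        simp
      rw [← hx0]
      have hmem : Iio (R.τ s) ∈ 𝓝[Ici (0 : ℝ)] (0 : ℝ) :=
        nhdsWithin_le_nhds (Iio_mem_nhds hτp)
      have hself : Ici (0 : ℝ) ∈ 𝓝[Ici (0 : ℝ)] (0 : ℝ) := self_mem_nhdsWithin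
      have hev : R.η s =ᶠ[𝓝[Ici (0 : ℝ)] (0 : ℝ)] id := by
        filter_upwards [hmem, hself] with y hy1 hy2
        exact heq y hy1 hy2
      exact continuousWithinAt_id.congr_of_eventuallyEq hev (by simpa using hη0)
  refine ⟨part1, ⟨hcont, hmono, hconv⟩, ?_⟩
  intro x hx
  have hrx : 0 < R.r' x := R.deriv_pos x hx
  set L := Real.log (R.r' 0 / R.r' x) / Real.log s with hL
  have hL0 : 0 ≤ L := by
    apply div_nonneg _ hlogs.le
    apply Real.log_nonneg
    rw [le_div_iff₀ hrx, one_mul]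
    exact R.anti_mono le_rfl hx
  have hsum1 : R.η s x = ∑ i ∈ Finset.range (R.M s x), R.κ (s ^ i) x := by
    rw [part1 x hx (R.M s x) le_rfl]
    apply Finset.sum_congr rfl
    intro i hi
    have hiM : (i : ℝ) < L := Nat.lt_ceil.1 (Finset.mem_range.1 hi)
    have hle : s ^ i * R.r' x ≤ R.r' 0 := (R.pow_mul_le_iff hs hx i).2 hiM.le
    exact ((R.iter_spec hs hx i).1 hle).2.1
  refine ⟨hsum1, ?_⟩
  rw [hsum1]
  have hMMt : R.M s x ≤ R.Mt s x := Nat.ceil_le_floor_add_one _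
  apply Finset.sum_subset (Finset.range_subset_range.2 hMMt)
  intro i hiMt hiM
  have h1 : L ≤ (i : ℝ) :=
    Nat.ceil_le.1 (le_of_not_gt (fun h => hiM (Finset.mem_range.2 h)))
  have h2 : (i : ℝ) ≤ L := by
    have : i ≤ ⌊L⌋₊ := Nat.lt_succ_iff.1 (Finset.mem_range.1 hiMt)
    calc (i : ℝ) ≤ (⌊L⌋₊ : ℝ) := by exact_mod_cast this
      _ ≤ L := Nat.floor_le hL0
  have hle : s ^ i * R.r' x ≤ R.r' 0 := (R.pow_mul_le_iff hs hx i).2 h2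
  have hge : R.r' 0 ≤ s ^ i * R.r' x := (R.le_pow_mul_iff hs hx i).2 h1
  obtain ⟨hτ, hit, hr⟩ := (R.iter_spec hs hx i).1 hle
  apply R.r'_injOn (R.κ_nonneg _ (one_le_pow₀ hs1) x hτ) le_rfl
  rw [R.κ_spec _ (one_le_pow₀ hs1) x hτ]
  linarith
end

section
/- Let r be a regular reward function, p ∈ (0,1), s := 1/(1−p), and let ω := η_s^{-1} : [0,∞) → [0,∞) be the inverse of η_s. Then: (i) ω is strictly increasing and concave, and ω(x) ≤ x for all x ≥ 0 (so ω restricted to [0,c] is a normal stationary policy for every c > 0); and (ii) writing σ̄(x) := x − ω(x), for every x ≥ 0 and i ≥ 1 one has ω(σ̄^{(i−1)}(x)) = κ̄_s^{(i−1)}(ω(x)), which equals κ_{s^{i−1}}(ω(x)) if i ≤ M_s(ω(x)) and equals 0 otherwise. -/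
open Set Filter MeasureTheory

/-! Since `κ̄_s` is monotone and convex, so is every iterate, and hence `η_s`, which on each
interval `[0, b]` is the finite sum of the first `M_s(b)` iterates (the later ones vanish
because `r'(κ̄_s^{(i)} y) = min (s^i r'(y), r'(0))`). Its inverse `ω` is therefore increasing
and concave, and `ω ≤ id` because `η_s(y) ≥ y`. The identity `η_s(y) = y + η_s(κ̄_s y)` says
that `η_s` conjugates `κ̄_s` to `σ̄`, which gives the formula for `ω ∘ σ̄^{(i-1)}`. -/

theorem MonotoneOn.strictMonoOn_of_rightInvOn {α β : Type*} [Preorder α] [LinearOrder β]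
    {f : β → α} {g : α → β} {S : Set α} {T : Set β} (hf : MonotoneOn f T) (hg : MapsTo g S T)
    (hfg : RightInvOn g f S) : StrictMonoOn g S := by
  intro x hx y hy hxy
  by_contra! hle
  have := hf (hg hy) (hg hx) hle
  rw [hfg hx, hfg hy] at this
  exact this.not_gt hxy

theorem ConvexOn.concaveOn_of_invOn {𝕜 E : Type*} [Semiring 𝕜] [PartialOrder 𝕜]
    [AddCommMonoid E] [PartialOrder E] [SMul 𝕜 E] {S : Set E} {f g : E → E}
    (hf : ConvexOn 𝕜 S f) (hf' : MapsTo f S S) (hg : MapsTo g S S) (hg_mono : MonotoneOn g S)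
    (hfg : InvOn g f S S) : ConcaveOn 𝕜 S g := by
  refine ⟨hf.1, fun x hx y hy a b ha hb hab => ?_⟩
  have hcomb : a • g x + b • g y ∈ S := hf.1 (hg hx) (hg hy) ha hb hab
  have hle : f (a • g x + b • g y) ≤ a • x + b • y := by
    simpa only [hfg.2 hx, hfg.2 hy] using hf.2 (hg hx) (hg hy) ha hb hab
  simpa only [hfg.1 hcomb] using hg_mono (hf' hcomb) (hf.1 hx hy ha hb hab) hle

theorem Set.MapsTo.iterate_semiconj {α β : Type*} {f : α → β} {ga : α → α} {gb : β → β}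
    {S : Set α} (hS : MapsTo ga S S) (h : ∀ x ∈ S, f (ga x) = gb (f x)) (n : ℕ) {x : α}
    (hx : x ∈ S) : f (ga^[n] x) = gb^[n] (f x) := by
  induction n with
  | zero => rfl
  | succ n ih =>
    rw [Function.iterate_succ_apply', Function.iterate_succ_apply', h _ (hS.iterate n hx), ih]

namespace RegularReward

variable (R : RegularReward) {s : ℝ}

theorem r'_injOn_s9 : InjOn R.r' (Ici 0) := R.deriv_strictAnti.injOn

theorem kbar_nonneg_s9 (hs : 1 ≤ s) (y : ℝ) : 0 ≤ R.kbar s y :=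
  R.κ_nonneg s hs _ (le_max_right _ _)

theorem iterate_kbar_nonneg (hs : 1 ≤ s) {y : ℝ} (hy : 0 ≤ y) (i : ℕ) :
    0 ≤ (R.kbar s)^[i] y := by
  cases i with
  | zero => exact hy
  | succ i => rw [Function.iterate_succ_apply']; exact R.kbar_nonneg_s9 hs _

theorem r'_kbar_s9 (hs : 1 ≤ s) {y : ℝ} (hy : 0 ≤ y) :
    R.r' (R.kbar s y) = min (s * R.r' y) (R.r' 0) := by
  have hτ := R.τ_nonneg s hs
  have hsτ : s * R.r' (R.τ s) = R.r' 0 := by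
    rw [R.τ_spec s hs]; field_simp [(zero_lt_one.trans_le hs).ne']
  rw [kbar, R.κ_spec s hs _ (le_max_right _ _)]
  rcases le_total y (R.τ s) with h | h
  · have : R.r' (R.τ s) ≤ R.r' y := R.deriv_strictAnti.antitoneOn hy hτ h
    rw [max_eq_right h, min_eq_right (hsτ ▸ by gcongr), hsτ]
  · have : R.r' y ≤ R.r' (R.τ s) := R.deriv_strictAnti.antitoneOn hτ hy h
    rw [max_eq_left h, min_eq_left (hsτ ▸ by gcongr)]

theorem r'_iterate_kbar (hs : 1 ≤ s) {y : ℝ} (hy : 0 ≤ y) (i : ℕ) :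
    R.r' ((R.kbar s)^[i] y) = min (s ^ i * R.r' y) (R.r' 0) := by
  induction i with
  | zero =>
    rw [Function.iterate_zero_apply, pow_zero, one_mul,
      min_eq_left (R.deriv_strictAnti.antitoneOn self_mem_Ici hy hy)]
  | succ i ih =>
    have hr0 : 0 ≤ R.r' 0 := (R.deriv_pos 0 le_rfl).le
    rw [Function.iterate_succ_apply', R.r'_kbar_s9 hs (R.iterate_kbar_nonneg hs hy i), ih,
      mul_min_of_nonneg _ _ (zero_le_one.trans hs), min_assoc,
      min_eq_right (le_mul_of_one_le_left hr0 hs), ← mul_assoc, ← pow_succ']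

theorem M_le_iff (hs : 1 < s) {y : ℝ} (hy : 0 ≤ y) (i : ℕ) :
    R.M s y ≤ i ↔ R.r' 0 ≤ s ^ i * R.r' y := by
  have hry := R.deriv_pos y hy
  rw [M, Nat.ceil_le, div_le_iff₀ (Real.log_pos hs), ← Real.log_pow,
    Real.log_le_log_iff (div_pos (R.deriv_pos 0 le_rfl) hry) (pow_pos (by linarith) i),
    div_le_iff₀ hry]

theorem M_monotoneOn (hs : 1 < s) : MonotoneOn (R.M s) (Ici 0) := by
  intro x hx y hy hxy
  rw [R.M_le_iff hs hx]
  calc R.r' 0 ≤ s ^ R.M s y * R.r' y := (R.M_le_iff hs hy _).1 le_rfl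
    _ ≤ s ^ R.M s y * R.r' x := by
      gcongr
      exact R.deriv_strictAnti.antitoneOn hx hy hxy

theorem iterate_kbar_eq_zero (hs : 1 < s) {y : ℝ} (hy : 0 ≤ y) {i : ℕ} (hi : R.M s y ≤ i) :
    (R.kbar s)^[i] y = 0 :=
  R.r'_injOn_s9 (R.iterate_kbar_nonneg hs.le hy i) self_mem_Ici <| by
    rw [R.r'_iterate_kbar hs.le hy, min_eq_right ((R.M_le_iff hs hy i).1 hi)]

theorem iterate_kbar_eq_κ (hs : 1 < s) {y : ℝ} (hy : 0 ≤ y) {i : ℕ} (hi : i < R.M s y) :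
    (R.kbar s)^[i] y = R.κ (s ^ i) y := by
  have hsi : 1 ≤ s ^ i := one_le_pow₀ hs.le
  have hlt : s ^ i * R.r' y < R.r' 0 := by
    simpa only [not_le] using (R.M_le_iff hs hy i).not.1 hi.not_ge
  have hτ : R.τ (s ^ i) ≤ y := by
    by_contra! h
    have := R.deriv_strictAnti hy (R.τ_nonneg _ hsi) h
    rw [R.τ_spec _ hsi, div_lt_iff₀ (by positivity), mul_comm] at this
    exact this.not_gt hlt
  refine R.r'_injOn_s9 (R.iterate_kbar_nonneg hs.le hy i) (R.κ_nonneg _ hsi y hτ) ?_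
  rw [R.κ_spec _ hsi y hτ, R.r'_iterate_kbar hs.le hy, min_eq_left hlt.le]

theorem summable_iterate_kbar (hs : 1 < s) {y : ℝ} (hy : 0 ≤ y) :
    Summable fun i => (R.kbar s)^[i] y :=
  summable_of_ne_finset_zero (s := Finset.range (R.M s y)) fun _ hi =>
    R.iterate_kbar_eq_zero hs hy (by simpa using hi)

theorem η_eq_sum_range (hs : 1 < s) {y : ℝ} (hy : 0 ≤ y) {N : ℕ} (hN : R.M s y ≤ N) :
    R.η s y = ∑ i ∈ Finset.range N, (R.kbar s)^[i] y :=
  tsum_eq_sum fun _ hi => R.iterate_kbar_eq_zero hs hy (hN.trans (by simpa using hi))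

theorem η_eq_add_η_kbar (hs : 1 < s) {y : ℝ} (hy : 0 ≤ y) :
    R.η s y = y + R.η s (R.kbar s y) :=
  (R.summable_iterate_kbar hs hy).tsum_eq_zero_add

theorem le_η (hs : 1 < s) {y : ℝ} (hy : 0 ≤ y) : y ≤ R.η s y := by
  rw [R.η_eq_add_η_kbar hs hy, R.η_eq_sum_range hs (R.kbar_nonneg_s9 hs.le y) le_rfl]
  exact le_add_of_nonneg_right
    (Finset.sum_nonneg fun i _ => R.iterate_kbar_nonneg hs.le (R.kbar_nonneg_s9 hs.le y) i)

theorem mapsTo_η (hs : 1 < s) : MapsTo (R.η s) (Ici 0) (Ici 0) :=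
  fun _ hy => le_trans hy (R.le_η hs hy)

theorem eqOn_η_sum_range (hs : 1 < s) (b : ℝ) :
    EqOn (R.η s) (fun y => ∑ i ∈ Finset.range (R.M s b), (R.kbar s)^[i] y) (Icc 0 b) :=
  fun _ hy => R.η_eq_sum_range hs hy.1 <|
    R.M_monotoneOn hs hy.1 (hy.1.trans hy.2 : (0 : ℝ) ≤ b) hy.2

theorem monotone_kbar (hs : 1 ≤ s) : Monotone (R.kbar s) := by
  have hκ : MonotoneOn (R.κ s) (Ici (R.τ s)) := by
    intro a ha b hb hab
    by_contra! h
    have := R.deriv_strictAnti (R.κ_nonneg s hs b hb) (R.κ_nonneg s hs a ha) h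
    rw [R.κ_spec s hs a ha, R.κ_spec s hs b hb] at this
    have hτ := R.τ_nonneg s hs
    exact (lt_of_mul_lt_mul_left this (by linarith)).not_ge
      (R.deriv_strictAnti.antitoneOn (hτ.trans ha) (hτ.trans hb) hab)
  exact fun a b hab =>
    hκ (mem_Ici.2 (le_max_right _ _)) (mem_Ici.2 (le_max_right _ _)) (max_le_max hab le_rfl)

theorem convexOn_kbar (hs : 1 < s) : ConvexOn ℝ univ (R.kbar s) := by
  refine ⟨convex_univ, fun a _ b _ ta tb hta htb hab => ?_⟩
  set τ := R.τ s
  have hτ : τ ≤ ta • max a τ + tb • max b τ :=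
    calc τ = ta • τ + tb • τ := (Convex.combo_self hab τ).symm
      _ ≤ ta • max a τ + tb • max b τ := by gcongr <;> exact le_max_right _ _
  calc R.kbar s (ta • a + tb • b) ≤ R.kbar s (ta • max a τ + tb • max b τ) :=
        R.monotone_kbar hs.le (by gcongr <;> exact le_max_left _ _)
    _ = R.κ s (ta • max a τ + tb • max b τ) := by rw [kbar, max_eq_left hτ]
    _ ≤ ta • R.kbar s a + tb • R.kbar s b :=
        (R.κ_convex s hs).2 (mem_Ici.2 (le_max_right _ _)) (mem_Ici.2 (le_max_right _ _))
          hta htb hab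

theorem convexOn_iterate_kbar (hs : 1 < s) (n : ℕ) : ConvexOn ℝ univ (R.kbar s)^[n] := by
  induction n with
  | zero => exact convexOn_id convex_univ
  | succ n ih =>
    refine ⟨convex_univ, fun a _ b _ ta tb hta htb hab => ?_⟩
    simp only [Function.iterate_succ_apply']
    calc R.kbar s ((R.kbar s)^[n] (ta • a + tb • b))
        ≤ R.kbar s (ta • (R.kbar s)^[n] a + tb • (R.kbar s)^[n] b) :=
          R.monotone_kbar hs.le (ih.2 trivial trivial hta htb hab)
      _ ≤ ta • R.kbar s ((R.kbar s)^[n] a) + tb • R.kbar s ((R.kbar s)^[n] b) :=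
          (R.convexOn_kbar hs).2 trivial trivial hta htb hab

theorem monotoneOn_η (hs : 1 < s) : MonotoneOn (R.η s) (Ici 0) := fun x hx y hy hxy => by
  rw [R.eqOn_η_sum_range hs y ⟨hx, hxy⟩, R.eqOn_η_sum_range hs y ⟨hy, le_rfl⟩]
  exact Finset.sum_le_sum fun i _ => (R.monotone_kbar hs.le).iterate i hxy

theorem convexOn_η (hs : 1 < s) : ConvexOn ℝ (Ici 0) (R.η s) := by
  refine ⟨convex_Ici 0, fun x hx y hy a b ha hb hab => ?_⟩
  have hx' : x ∈ Icc 0 (max x y) := ⟨hx, le_max_left _ _⟩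
  have hy' : y ∈ Icc 0 (max x y) := ⟨hy, le_max_right _ _⟩
  have hη := R.eqOn_η_sum_range hs (max x y)
  rw [hη hx', hη hy', hη (convex_Icc _ _ hx' hy' ha hb hab)]
  simp only [smul_eq_mul, Finset.mul_sum, ← Finset.sum_add_distrib]
  exact Finset.sum_le_sum fun i _ => (R.convexOn_iterate_kbar hs i).2 trivial trivial ha hb hab

end RegularReward

/-- **Properties of the maximin optimal policy `ω = η_s⁻¹`** (Theorem 4, parts 1–2).
Let `r` be a regular reward function, `p ∈ (0,1)`, `s = 1/(1-p)`, and let `ω` be the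
inverse of `η_s` on `[0, ∞)`. Then: (i) `ω` is strictly increasing and concave on
`[0, ∞)` and satisfies `ω x ≤ x`, so it restricts to a normal stationary policy on
`[0, c]` for every `c > 0`; (ii) with `σ̄ (x) := x - ω x`, for every `x ≥ 0` and
`i ≥ 1`, `ω (σ̄^{(i-1)} x) = κ̄_s^{(i-1)} (ω x)`, which equals `κ_{s^{i-1}} (ω x)` if
`i ≤ M_s (ω x)` and equals `0` otherwise. -/
theorem omega_properties (R : RegularReward) (p : ℝ) (hp : p ∈ Ioo (0 : ℝ) 1)
    (s : ℝ) (hs : s = 1 / (1 - p))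
    (ω : ℝ → ℝ)
    (hω_nonneg : ∀ x : ℝ, 0 ≤ x → 0 ≤ ω x)
    (hω_rightInv : ∀ x : ℝ, 0 ≤ x → R.η s (ω x) = x)
    (hω_leftInv : ∀ y : ℝ, 0 ≤ y → ω (R.η s y) = y) :
    (StrictMonoOn ω (Ici (0 : ℝ)) ∧ ConcaveOn ℝ (Ici (0 : ℝ)) ω ∧
        ∀ x : ℝ, 0 ≤ x → ω x ≤ x) ∧
      (∀ x : ℝ, 0 ≤ x → ∀ i : ℕ, 1 ≤ i →
        ω ((fun y => y - ω y)^[i - 1] x) = (R.kbar s)^[i - 1] (ω x) ∧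
          (i ≤ R.M s (ω x) → (R.kbar s)^[i - 1] (ω x) = R.κ (s ^ (i - 1)) (ω x)) ∧
          (R.M s (ω x) < i → (R.kbar s)^[i - 1] (ω x) = 0)) := by
  have hs1 : 1 < s := by
    rw [hs]; exact one_lt_one_div (by linarith [hp.2]) (by linarith [hp.1])
  have hω : MapsTo ω (Ici 0) (Ici 0) := fun x hx => hω_nonneg x hx
  have hinv : InvOn ω (R.η s) (Ici 0) (Ici 0) :=
    ⟨fun y hy => hω_leftInv y hy, fun x hx => hω_rightInv x hx⟩
  have hmono : StrictMonoOn ω (Ici 0) :=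
    (R.monotoneOn_η hs1).strictMonoOn_of_rightInvOn hω hinv.2
  refine ⟨⟨hmono, (R.convexOn_η hs1).concaveOn_of_invOn (R.mapsTo_η hs1) hω
    hmono.monotoneOn hinv, fun x hx => ?_⟩, fun x hx i hi => ⟨?_, fun h => ?_, fun h => ?_⟩⟩
  · simpa only [hω_rightInv x hx] using R.le_η hs1 (hω_nonneg x hx)
  · have hconj : ∀ y ∈ Ici 0, R.η s (R.kbar s y) = (fun z => z - ω z) (R.η s y) :=
      fun y hy => by
        show _ = R.η s y - ω (R.η s y)
        rw [hω_leftInv y hy]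
        linarith [R.η_eq_add_η_kbar hs1 hy]
    have hkbar : MapsTo (R.kbar s) (Ici 0) (Ici 0) := fun y _ => R.kbar_nonneg_s9 hs1.le y
    have hiter := hkbar.iterate_semiconj (gb := fun z => z - ω z) hconj (i - 1) (hω_nonneg x hx)
    rw [hω_rightInv x hx] at hiter
    rw [← hiter, hω_leftInv _ (R.iterate_kbar_nonneg hs1.le (hω_nonneg x hx) _)]
  · exact R.iterate_kbar_eq_κ hs1 (hω_nonneg x hx) (by omega)
  · exact R.iterate_kbar_eq_zero hs1 (hω_nonneg x hx) (by omega)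
end

section
/- Let r be a reward function, c > 0, p ∈ (0,1), and let σ be a Borel-measurable stationary policy on [0,c] with reserve policy σ̄(x) := x − σ(x). Under i.i.d. Bernoulli arrivals B̃_p := (1−p)δ_0 + p δ_c and initial battery level b_1⁻ = 0, the expected average reward converges and lim_{n→∞} (1/n)·E_{X^n ∼ B̃_p^{⊗n}}[Σ_{t=1}^n r(σ(b_t))] = Σ_{i=1}^∞ p(1−p)^{i−1} r(σ(σ̄^{(i−1)}(c))), where σ̄^{(i)} denotes the i-fold iterate of σ̄ with σ̄^{(0)}(x) = x. -/
open Set MeasureTheory Filter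

/-!
Arrivals are almost surely `0` or `c`. A full arrival refills the battery to `c`, and an empty
slot applies the reserve map `σ̄ y = y - σ y`, so if the last full arrival up to time `t` happened
`j` slots earlier then `b_t = σ̄^[j] c`, and if there was none then `b_t = 0`. That event has
probability `p (1 - p)^j`, so the expected reward at time `t` is the `t`-th partial sum of the
series, and the average over `t` converges to its sum by Cesàro.
-/

/-- Battery levels: `battery c σ x xs t` is the battery level `b_{t+1}` (just after the
arrival of `xs t`) when the initial level is `b_{1⁻} = x`, the arrivals are
`xs 0, xs 1, …`, and the stationary policy `σ` is used. -/
noncomputable def battery (c : ℝ) (σ : ℝ → ℝ) (x : ℝ) (xs : ℕ → ℝ) : ℕ → ℝ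
  | 0 => min (x + xs 0) c
  | t + 1 => min (battery c σ x xs t - σ (battery c σ x xs t) + xs (t + 1)) c

/-- The `n`-horizon total reward `R_n(σ, (x_1, …, x_n), x) = ∑_{t=1}^n r (σ (b_t))`. -/
noncomputable def totalReward (r : ℝ → ℝ) (c : ℝ) (σ : ℝ → ℝ) (x : ℝ) (xs : ℕ → ℝ)
    (n : ℕ) : ℝ :=
  ∑ t ∈ Finset.range n, r (σ (battery c σ x xs t))

/-- The Bernoulli energy-arrival distribution `B̃_p = (1-p) δ_0 + p δ_c`. -/
noncomputable def bern (c p : ℝ) : Measure ℝ :=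
  ENNReal.ofReal (1 - p) • Measure.dirac 0 + ENNReal.ofReal p • Measure.dirac c

def zeroExtend {α : Type*} [Zero α] {n : ℕ} (xs : Fin n → α) (t : ℕ) : α :=
  if h : t < n then xs ⟨t, h⟩ else 0

lemma measurable_zeroExtend {α : Type*} [Zero α] [MeasurableSpace α] {n : ℕ} :
    Measurable (zeroExtend : (Fin n → α) → ℕ → α) :=
  measurable_pi_lambda _ fun t => by
    by_cases h : t < n
    · simpa only [zeroExtend, h, dite_true] using measurable_pi_apply _
    · simpa only [zeroExtend, h, dite_false] using measurable_const

lemma pi_setOf_forall_zeroExtend_mem {α : Type*} [Zero α] [MeasurableSpace α] (ν : Measure α)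
    [IsProbabilityMeasure ν] {n : ℕ} {I : Finset ℕ} (hI : ∀ i ∈ I, i < n) (A : ℕ → Set α) :
    Measure.pi (fun _ : Fin n => ν) {xs | ∀ i ∈ I, zeroExtend xs i ∈ A i} = ∏ i ∈ I, ν (A i) := by
  classical
  have hbox : {xs : Fin n → α | ∀ i ∈ I, zeroExtend xs i ∈ A i}
      = univ.pi fun i : Fin n => if (i : ℕ) ∈ I then A i else univ := by
    ext xs
    simp only [mem_ofPred_eq, mem_univ_pi]
    constructor
    · intro h i
      split_ifs with hi
      · simpa [zeroExtend] using h i hi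
      · trivial
    · intro h i hi
      simpa [zeroExtend, hI i hi, hi] using h ⟨i, hI i hi⟩
  rw [hbox, Measure.pi_pi]
  simp only [apply_ite ν, measure_univ]
  rw [Fin.prod_univ_eq_prod_range (fun i => if i ∈ I then ν (A i) else 1), Finset.prod_ite_mem,
    Finset.inter_eq_right.2 fun i hi => Finset.mem_range.2 (hI i hi)]

section Bernoulli

variable {c p : ℝ}

lemma isProbabilityMeasure_bern (hp : p ∈ Icc (0 : ℝ) 1) : IsProbabilityMeasure (bern c p) := by
  constructor
  simp only [bern, Measure.add_apply, Measure.smul_apply, smul_eq_mul, measure_univ, mul_one]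
  rw [← ENNReal.ofReal_add (sub_nonneg.2 hp.2) hp.1, sub_add_cancel, ENNReal.ofReal_one]

lemma bern_singleton_self (hc : c ≠ 0) : bern c p {c} = ENNReal.ofReal p := by
  simp [bern, hc]

lemma bern_singleton_zero (hc : c ≠ 0) : bern c p {0} = ENNReal.ofReal (1 - p) := by
  simp [bern, hc.symm]

lemma ae_bern : ∀ᵐ y ∂bern c p, y = 0 ∨ y = c := by
  simp only [bern, ae_add_measure_iff]
  exact ⟨Measure.ae_smul_measure (by simp) _, Measure.ae_smul_measure (by simp) _⟩

end Bernoulli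

def IsStationaryPolicy (c : ℝ) (σ : ℝ → ℝ) : Prop :=
  ∀ y ∈ Icc (0 : ℝ) c, 0 ≤ σ y ∧ σ y ≤ y

namespace IsStationaryPolicy

variable {c : ℝ} {σ : ℝ → ℝ}

lemma apply_zero (hσ : IsStationaryPolicy c σ) (hc : 0 ≤ c) : σ 0 = 0 :=
  le_antisymm (hσ 0 ⟨le_rfl, hc⟩).2 (hσ 0 ⟨le_rfl, hc⟩).1

lemma mapsTo_reserve (hσ : IsStationaryPolicy c σ) :
    MapsTo (fun y => y - σ y) (Icc 0 c) (Icc 0 c) := fun y hy =>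
  ⟨sub_nonneg.2 (hσ y hy).2, (sub_le_self _ (hσ y hy).1).trans hy.2⟩

end IsStationaryPolicy

section Battery

variable {c : ℝ} {σ : ℝ → ℝ} {x : ℝ} {xs : ℕ → ℝ}

lemma battery_mem_Icc (hc : 0 ≤ c) (hσ : ∀ y ∈ Icc (0 : ℝ) c, σ y ≤ y) (hx : 0 ≤ x)
    (hxs : ∀ i, 0 ≤ xs i) (t : ℕ) : battery c σ x xs t ∈ Icc 0 c := by
  induction t with
  | zero => exact ⟨le_min (add_nonneg hx (hxs 0)) hc, min_le_right _ _⟩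
  | succ t ih =>
    exact ⟨le_min (add_nonneg (sub_nonneg.2 (hσ _ ih)) (hxs _)) hc, min_le_right _ _⟩

lemma battery_eq_zero (hc : 0 ≤ c) (hσ : σ 0 = 0) {t : ℕ} (h : ∀ i ≤ t, xs i = 0) :
    battery c σ 0 xs t = 0 := by
  induction t with
  | zero => simp [battery, h 0 le_rfl, hc]
  | succ t ih => simp [battery, ih fun i hi => h i (by omega), hσ, h (t + 1) le_rfl, hc]

variable (hc : 0 ≤ c) (hσ : IsStationaryPolicy c σ) (hx : 0 ≤ x)
  (hxs : ∀ i, 0 ≤ xs i)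
include hc hσ hx hxs

lemma battery_eq_of_arrival {t : ℕ} (ht : xs t = c) : battery c σ x xs t = c := by
  cases t with
  | zero => simp only [battery, ht, min_eq_right (le_add_of_nonneg_left hx)]
  | succ t =>
    have hb := battery_mem_Icc hc (fun y hy => (hσ y hy).2) hx hxs t
    simp only [battery, ht, min_eq_right (le_add_of_nonneg_left (sub_nonneg.2 (hσ _ hb).2))]

lemma battery_succ_of_eq_zero {t : ℕ} (ht : xs (t + 1) = 0) :
    battery c σ x xs (t + 1) = battery c σ x xs t - σ (battery c σ x xs t) := by
  have hb := battery_mem_Icc hc (fun y hy => (hσ y hy).2) hx hxs t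
  simp only [battery, ht, add_zero, min_eq_left ((hσ.mapsTo_reserve hb).2)]

lemma battery_add_eq_iterate {s : ℕ} (hs : xs s = c) :
    ∀ j : ℕ, (∀ k, s < k → k ≤ s + j → xs k = 0) →
      battery c σ x xs (s + j) = (fun y => y - σ y)^[j] c
  | 0, _ => battery_eq_of_arrival hc hσ hx hxs hs
  | j + 1, hz => by
    rw [← add_assoc, battery_succ_of_eq_zero hc hσ hx hxs (t := s + j) (hz _ (by omega) le_rfl),
      battery_add_eq_iterate hs j fun k hk hkj => hz k hk (by omega),
      Function.iterate_succ_apply']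

end Battery

def lastFullArrival (c : ℝ) (t j : ℕ) : Set (ℕ → ℝ) :=
  {xs | xs (t - j) = c ∧ ∀ k ∈ Finset.Ioc (t - j) t, xs k = 0}

lemma measurableSet_lastFullArrival (c : ℝ) (t j : ℕ) : MeasurableSet (lastFullArrival c t j) := by
  unfold lastFullArrival
  measurability

lemma apply_battery_eq_sum_indicator {c : ℝ} {σ : ℝ → ℝ} {xs : ℕ → ℝ} (hc : 0 < c)
    (hσ : IsStationaryPolicy c σ) (hxs : ∀ i, xs i = 0 ∨ xs i = c)
    {f : ℝ → ℝ} (hf : f 0 = 0) (t : ℕ) :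
    f (battery c σ 0 xs t) = ∑ j ∈ Finset.range (t + 1),
      (lastFullArrival c t j).indicator (fun _ => f ((fun y => y - σ y)^[j] c)) xs := by
  by_cases harr : ∃ k ≤ t, xs k = c
  · obtain ⟨k, hkt, hk⟩ := harr
    set m := Nat.findGreatest (fun k => xs k = c) t
    have hmc : xs m = c := Nat.findGreatest_spec (P := fun k => xs k = c) hkt hk
    have hmt : m ≤ t := Nat.findGreatest_le t
    have hzero : ∀ k, m < k → k ≤ t → xs k = 0 := fun k h1 h2 =>
      (hxs k).resolve_right (Nat.findGreatest_is_greatest h1 h2)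
    have hbattery : battery c σ 0 xs t = (fun y => y - σ y)^[t - m] c := by
      have hxs₀ : ∀ i, 0 ≤ xs i := fun i => (hxs i).elim (·.ge) (· ▸ hc.le)
      have := battery_add_eq_iterate hc.le hσ le_rfl hxs₀ hmc (t - m)
        fun k h1 h2 => hzero k h1 (by omega)
      rwa [Nat.add_sub_cancel' hmt] at this
    have hmem : xs ∈ lastFullArrival c t (t - m) := by
      refine ⟨by rwa [Nat.sub_sub_self hmt], fun k hk => ?_⟩
      rw [Finset.mem_Ioc, Nat.sub_sub_self hmt] at hk
      exact hzero k hk.1 hk.2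
    rw [Finset.sum_eq_single_of_mem (t - m) (by simp only [Finset.mem_range]; omega),
      indicator_of_mem hmem, hbattery]
    intro j hj hjm
    refine indicator_of_notMem (fun hj' => hc.ne ?_) _
    obtain ⟨hjc, hj0⟩ := hj'
    have hjm_le : t - j ≤ m := Nat.le_findGreatest (Nat.sub_le t j) hjc
    have hjt : j < t + 1 := Finset.mem_range.1 hj
    rw [← hmc, hj0 m (Finset.mem_Ioc.2 ⟨by omega, hmt⟩)]
  · push Not at harr
    rw [battery_eq_zero hc.le (hσ.apply_zero hc.le) fun i hi => (hxs i).resolve_right (harr i hi), hf]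
    exact (Finset.sum_eq_zero fun j _ =>
      indicator_of_notMem (fun h => harr _ (Nat.sub_le t j) h.1) _).symm

section Expectation

variable {c p : ℝ} {σ : ℝ → ℝ} {f : ℝ → ℝ} {n : ℕ}

lemma pi_bern_real_preimage_lastFullArrival (hc : c ≠ 0) (hp : p ∈ Icc (0 : ℝ) 1) {t j : ℕ}
    (hj : j ≤ t) (ht : t < n) :
    (Measure.pi fun _ : Fin n => bern c p).real (zeroExtend ⁻¹' lastFullArrival c t j)
      = p * (1 - p) ^ j := by
  have := isProbabilityMeasure_bern (c := c) hp
  have hset : zeroExtend ⁻¹' lastFullArrival c t j = {xs : Fin n → ℝ |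
      ∀ i ∈ insert (t - j) (Finset.Ioc (t - j) t),
        zeroExtend xs i ∈ (if i = t - j then {c} else {0} : Set ℝ)} := by
    ext xs
    rw [mem_ofPred_eq, Finset.forall_mem_insert, if_pos rfl, mem_singleton_iff]
    refine and_congr Iff.rfl (forall₂_congr fun i hi => ?_)
    rw [if_neg (Finset.mem_Ioc.1 hi).1.ne', mem_singleton_iff]
  have hIoc : ∀ i ∈ Finset.Ioc (t - j) t,
      bern c p (if i = t - j then {c} else {0}) = ENNReal.ofReal (1 - p) := fun i hi => by
    rw [if_neg (Finset.mem_Ioc.1 hi).1.ne', bern_singleton_zero hc]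
  rw [measureReal_def, hset, pi_setOf_forall_zeroExtend_mem _ fun i hi => ?_,
    Finset.prod_insert (by simp), if_pos rfl, bern_singleton_self hc, Finset.prod_congr rfl hIoc,
    Finset.prod_const, Nat.card_Ioc, Nat.sub_sub_self hj, ENNReal.toReal_mul, ENNReal.toReal_pow,
    ENNReal.toReal_ofReal hp.1, ENNReal.toReal_ofReal (sub_nonneg.2 hp.2)]
  rcases Finset.mem_insert.1 hi with rfl | hi
  · omega
  · exact (Finset.mem_Ioc.1 hi).2.trans_lt ht

variable (hc : 0 < c) (hp : p ∈ Icc (0 : ℝ) 1) (hσ : IsStationaryPolicy c σ)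
  (hf : f 0 = 0)
include hc hp hσ hf

lemma apply_battery_ae_eq_sum_indicator (t : ℕ) :
    (fun xs : Fin n → ℝ => f (battery c σ 0 (zeroExtend xs) t))
      =ᵐ[Measure.pi fun _ => bern c p] fun xs => ∑ j ∈ Finset.range (t + 1),
        (zeroExtend ⁻¹' lastFullArrival c t j).indicator
          (fun _ => f ((fun y => y - σ y)^[j] c)) xs := by
  have := isProbabilityMeasure_bern (c := c) hp
  have hcoord : ∀ᵐ xs ∂Measure.pi (fun _ : Fin n => bern c p), ∀ i, xs i = 0 ∨ xs i = c :=
    ae_all_iff.2 fun i =>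
      Measure.tendsto_eval_ae_ae (μ := fun _ => bern c p) (i := i) |>.eventually ae_bern
  filter_upwards [hcoord] with xs hxs
  refine apply_battery_eq_sum_indicator hc hσ (fun i => ?_) hf t
  by_cases hi : i < n
  · simpa only [zeroExtend, hi, dite_true] using hxs ⟨i, hi⟩
  · simp only [zeroExtend, hi, dite_false, true_or]

lemma integrable_apply_battery (t : ℕ) :
    Integrable (fun xs : Fin n → ℝ => f (battery c σ 0 (zeroExtend xs) t))
      (Measure.pi fun _ => bern c p) := by
  have := isProbabilityMeasure_bern (c := c) hp
  refine (integrable_finsetSum _ fun j _ => (integrable_const _).indicator ?_).congr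
    (apply_battery_ae_eq_sum_indicator hc hp hσ hf t).symm
  exact measurable_zeroExtend (measurableSet_lastFullArrival c t j)

lemma integral_apply_battery {t : ℕ} (ht : t < n) :
    ∫ xs : Fin n → ℝ, f (battery c σ 0 (zeroExtend xs) t) ∂(Measure.pi fun _ => bern c p)
      = ∑ j ∈ Finset.range (t + 1), p * (1 - p) ^ j * f ((fun y => y - σ y)^[j] c) := by
  have := isProbabilityMeasure_bern (c := c) hp
  have hmeas (j : ℕ) : MeasurableSet (zeroExtend (n := n) ⁻¹' lastFullArrival c t j) :=
    measurable_zeroExtend (measurableSet_lastFullArrival c t j)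
  rw [integral_congr_ae (apply_battery_ae_eq_sum_indicator hc hp hσ hf t),
    integral_finsetSum _ fun j _ => (integrable_const _).indicator (hmeas j)]
  refine Finset.sum_congr rfl fun j hj => ?_
  rw [integral_indicator_const _ (hmeas j), smul_eq_mul,
    pi_bern_real_preimage_lastFullArrival hc.ne' hp (Finset.mem_range_succ_iff.1 hj) ht]

end Expectation

lemma integral_totalReward {r : ℝ → ℝ} (hr : r 0 = 0) {c p : ℝ} (hc : 0 < c)
    (hp : p ∈ Icc (0 : ℝ) 1) {σ : ℝ → ℝ} (hσ : IsStationaryPolicy c σ) (n : ℕ) :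
    ∫ xs : Fin n → ℝ, totalReward r c σ 0 (zeroExtend xs) n ∂(Measure.pi fun _ => bern c p)
      = ∑ t ∈ Finset.range n, ∑ j ∈ Finset.range (t + 1),
          p * (1 - p) ^ j * r (σ ((fun y => y - σ y)^[j] c)) := by
  have hrσ : r (σ 0) = 0 := by rw [hσ.apply_zero hc.le, hr]
  unfold totalReward
  rw [integral_finsetSum _ fun t _ =>
    integrable_apply_battery (f := fun y => r (σ y)) hc hp hσ hrσ t]
  exact Finset.sum_congr rfl fun t ht =>
    integral_apply_battery (f := fun y => r (σ y)) hc hp hσ hrσ (Finset.mem_range.1 ht)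

lemma summable_bernoulli_reward {r : ℝ → ℝ} (hr_zero : r 0 = 0)
    (hr_mono : MonotoneOn r (Ici (0 : ℝ))) {c p : ℝ} (hc : 0 ≤ c) (hp : p ∈ Ioo (0 : ℝ) 1)
    {σ : ℝ → ℝ} (hσ : IsStationaryPolicy c σ) :
    Summable fun i : ℕ => p * (1 - p) ^ i * r (σ ((fun y => y - σ y)^[i] c)) := by
  have hbound (y : ℝ) (hy : y ∈ Icc 0 c) : |r (σ y)| ≤ r c := by
    have hσy : σ y ∈ Icc 0 c := ⟨(hσ y hy).1, (hσ y hy).2.trans hy.2⟩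
    have h₀ : r 0 ≤ r (σ y) := hr_mono (mem_Ici.2 le_rfl) hσy.1 hσy.1
    have h₁ : r (σ y) ≤ r c := hr_mono hσy.1 hc hσy.2
    exact (abs_of_nonneg (hr_zero ▸ h₀)).trans_le h₁
  simp_rw [mul_assoc]
  refine Summable.mul_left p <| Summable.of_norm_bounded
    ((summable_geometric_of_lt_one (sub_nonneg.2 hp.2.le) (by linarith [hp.1])).mul_right (r c))
    fun i => ?_
  rw [Real.norm_eq_abs, abs_mul, abs_of_nonneg (pow_nonneg (sub_nonneg.2 hp.2.le) i)]
  exact mul_le_mul_of_nonneg_left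
    (hbound _ (hσ.mapsTo_reserve.iterate i ⟨hc, le_rfl⟩)) (pow_nonneg (sub_nonneg.2 hp.2.le) i)

theorem bernoulli_average_reward_general
    (r : ℝ → ℝ)
    (hr_zero : r 0 = 0)
    (hr_mono : MonotoneOn r (Ici (0 : ℝ)))
    (c : ℝ) (hc : 0 < c) (p : ℝ) (hp : p ∈ Ioo (0 : ℝ) 1)
    (σ : ℝ → ℝ)
    (hσ_pol : ∀ x ∈ Icc (0 : ℝ) c, 0 ≤ σ x ∧ σ x ≤ x) :
    Tendsto
      (fun n : ℕ => (1 / (n : ℝ)) *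
        ∫ xs : Fin n → ℝ,
          totalReward r c σ 0 (fun t => if h : t < n then xs ⟨t, h⟩ else 0) n
          ∂(Measure.pi fun _ : Fin n => bern c p))
      atTop
      (nhds (∑' i : ℕ, p * (1 - p) ^ i * r (σ ((fun y => y - σ y)^[i] c)))) := by
  have hsum := summable_bernoulli_reward hr_zero hr_mono hc.le hp hσ_pol
  refine (hsum.hasSum.tendsto_sum_nat.comp (tendsto_add_atTop_nat 1)).cesaro.congr fun n => ?_
  rw [one_div]
  exact congrArg _ (integral_totalReward hr_zero hc (Ioo_subset_Icc_self hp) hσ_pol n).symm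

/-- **Asymptotic expected average reward under Bernoulli arrivals** (Lemma 2). For a
reward function `r`, a Borel-measurable stationary policy `σ` on `[0, c]`, and i.i.d.
Bernoulli arrivals `B̃_p` with initial battery level `0`, the expected average reward
converges to `∑_{i=1}^∞ p (1-p)^{i-1} r (σ (σ̄^{(i-1)}(c)))`, where `σ̄ x = x - σ x`. -/
theorem bernoulli_average_reward
    (r : ℝ → ℝ)
    (hr_zero : r 0 = 0)
    (hr_nonneg : ∀ x : ℝ, 0 ≤ x → 0 ≤ r x)
    (hr_mono : MonotoneOn r (Ici (0 : ℝ)))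
    (hr_lip : ∃ K : NNReal, LipschitzOnWith K r (Ici (0 : ℝ)))
    (hr_concave : ConcaveOn ℝ (Ici (0 : ℝ)) r)
    (c : ℝ) (hc : 0 < c) (p : ℝ) (hp : p ∈ Ioo (0 : ℝ) 1)
    (σ : ℝ → ℝ) (hσ_meas : Measurable σ)
    (hσ_pol : ∀ x ∈ Icc (0 : ℝ) c, 0 ≤ σ x ∧ σ x ≤ x) :
    Tendsto
      (fun n : ℕ => (1 / (n : ℝ)) *
        ∫ xs : Fin n → ℝ,
          totalReward r c σ 0 (fun t => if h : t < n then xs ⟨t, h⟩ else 0) n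
          ∂(Measure.pi fun _ : Fin n => bern c p))
      atTop
      (nhds (∑' i : ℕ, p * (1 - p) ^ i * r (σ ((fun y => y - σ y)^[i] c)))) :=
  bernoulli_average_reward_general r hr_zero hr_mono c hc p hp σ hσ_pol
end
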